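/- arXiv:1612.04711 — 3 statements merged into one kernel-verified Lean document; each statement's English description precedes it below -/
import Mathlib

section
/- One-soliton solution of the Miwa (lattice BKP) equation: let p, q, r ∈ ℂ, K₁, K₂ ∈ ℂ and a ∈ ℂ with all expressions defined, set E(K)(n,m,h) = ((p+K)/(p-K))^n ((q+K)/(q-K))^m ((r+K)/(r-K))^h and τ(n,m,h)² = 1 + a·((K₁-K₂)/(K₁+K₂))·E(K₁)(n,m,h)·E(K₂)(n,m,h); assume a branch τ of the square root can be chosen consistently (e.g. τ = sqrt with the given right-hand side never vanishing along a suitable domain); then τ satisfies (p-q)(q-r)(r-p)·τ·τ̃̂̄ + (p+q)(p+r)(q-r)·τ̃·τ̂̄ + (r+p)(r+q)(p-q)·τ̄·τ̃̂ + (q+r)(q+p)(r-p)·τ̂·τ̃̄ = 0. -/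
set_option maxHeartbeats 4000000 in
lemma miwa_S1 (p q r K₁ K₂ : ℂ)
    (hp1 : p - K₁ ≠ 0) (hq1 : q - K₁ ≠ 0) (hr1 : r - K₁ ≠ 0)
    (hp2 : p - K₂ ≠ 0) (hq2 : q - K₂ ≠ 0) (hr2 : r - K₂ ≠ 0) :
    (p - q) * (q - r) * (r - p)
        * (1 + ((p + K₁) / (p - K₁) * ((p + K₂) / (p - K₂)))
            * ((q + K₁) / (q - K₁) * ((q + K₂) / (q - K₂)))
            * ((r + K₁) / (r - K₁) * ((r + K₂) / (r - K₂))))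
      + (p + q) * (p + r) * (q - r)
        * (((p + K₁) / (p - K₁) * ((p + K₂) / (p - K₂)))
            + ((q + K₁) / (q - K₁) * ((q + K₂) / (q - K₂)))
              * ((r + K₁) / (r - K₁) * ((r + K₂) / (r - K₂))))
      + (r + p) * (r + q) * (p - q)
        * (((r + K₁) / (r - K₁) * ((r + K₂) / (r - K₂)))
            + ((p + K₁) / (p - K₁) * ((p + K₂) / (p - K₂)))
              * ((q + K₁) / (q - K₁) * ((q + K₂) / (q - K₂))))
      + (q + r) * (q + p) * (r - p)
        * (((q + K₁) / (q - K₁) * ((q + K₂) / (q - K₂)))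
            + ((p + K₁) / (p - K₁) * ((p + K₂) / (p - K₂)))
              * ((r + K₁) / (r - K₁) * ((r + K₂) / (r - K₂)))) = 0 := by
  have ip1 : (p - K₁) * (p - K₁)⁻¹ = 1 := mul_inv_cancel₀ hp1
  have ip2 : (p - K₂) * (p - K₂)⁻¹ = 1 := mul_inv_cancel₀ hp2
  have iq1 : (q - K₁) * (q - K₁)⁻¹ = 1 := mul_inv_cancel₀ hq1
  have iq2 : (q - K₂) * (q - K₂)⁻¹ = 1 := mul_inv_cancel₀ hq2
  have ir1 : (r - K₁) * (r - K₁)⁻¹ = 1 := mul_inv_cancel₀ hr1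
  have ir2 : (r - K₂) * (r - K₂)⁻¹ = 1 := mul_inv_cancel₀ hr2
  have hPP : ((p - K₁) * (p - K₁)⁻¹) * ((p - K₂) * (p - K₂)⁻¹) = 1 := by
    rw [ip1, ip2]; norm_num
  have hQQ : ((q - K₁) * (q - K₁)⁻¹) * ((q - K₂) * (q - K₂)⁻¹) = 1 := by
    rw [iq1, iq2]; norm_num
  have hRR : ((r - K₁) * (r - K₁)⁻¹) * ((r - K₂) * (r - K₂)⁻¹) = 1 := by
    rw [ir1, ir2]; norm_num
  have hPQ : ((p - K₁) * (p - K₁)⁻¹) * ((p - K₂) * (p - K₂)⁻¹)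
      * ((q - K₁) * (q - K₁)⁻¹) * ((q - K₂) * (q - K₂)⁻¹) = 1 := by
    rw [ip1, ip2, iq1, iq2]; norm_num
  have hPR : ((p - K₁) * (p - K₁)⁻¹) * ((p - K₂) * (p - K₂)⁻¹)
      * ((r - K₁) * (r - K₁)⁻¹) * ((r - K₂) * (r - K₂)⁻¹) = 1 := by
    rw [ip1, ip2, ir1, ir2]; norm_num
  have hQR : ((q - K₁) * (q - K₁)⁻¹) * ((q - K₂) * (q - K₂)⁻¹)
      * ((r - K₁) * (r - K₁)⁻¹) * ((r - K₂) * (r - K₂)⁻¹) = 1 := by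
    rw [iq1, iq2, ir1, ir2]; norm_num
  have hALL : ((p - K₁) * (p - K₁)⁻¹) * ((p - K₂) * (p - K₂)⁻¹)
      * ((q - K₁) * (q - K₁)⁻¹) * ((q - K₂) * (q - K₂)⁻¹)
      * ((r - K₁) * (r - K₁)⁻¹) * ((r - K₂) * (r - K₂)⁻¹) = 1 := by
    rw [ip1, ip2, iq1, iq2, ir1, ir2]; norm_num
  have key : (p - q) * (q - r) * (r - p)
        * ((p - K₁) * (p - K₂) * ((q - K₁) * (q - K₂)) * ((r - K₁) * (r - K₂))
          + (p + K₁) * (p + K₂) * ((q + K₁) * (q + K₂)) * ((r + K₁) * (r + K₂)))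
      + (p + q) * (p + r) * (q - r)
        * ((p + K₁) * (p + K₂) * ((q - K₁) * (q - K₂)) * ((r - K₁) * (r - K₂))
          + (p - K₁) * (p - K₂) * ((q + K₁) * (q + K₂)) * ((r + K₁) * (r + K₂)))
      + (r + p) * (r + q) * (p - q)
        * ((r + K₁) * (r + K₂) * ((p - K₁) * (p - K₂)) * ((q - K₁) * (q - K₂))
          + (r - K₁) * (r - K₂) * ((p + K₁) * (p + K₂)) * ((q + K₁) * (q + K₂)))
      + (q + r) * (q + p) * (r - p)
        * ((q + K₁) * (q + K₂) * ((p - K₁) * (p - K₂)) * ((r - K₁) * (r - K₂))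
          + (q - K₁) * (q - K₂) * ((p + K₁) * (p + K₂)) * ((r + K₁) * (r + K₂))) = 0 := by
    ring
  linear_combination
    ((p - K₁)⁻¹ * (p - K₂)⁻¹ * (q - K₁)⁻¹ * (q - K₂)⁻¹ * (r - K₁)⁻¹ * (r - K₂)⁻¹) * key
    - (p - q) * (q - r) * (r - p) * hALL
    - (p + q) * (p + r) * (q - r) * ((p + K₁) / (p - K₁) * ((p + K₂) / (p - K₂))) * hQR
    - (p + q) * (p + r) * (q - r)
        * (((q + K₁) / (q - K₁) * ((q + K₂) / (q - K₂)))
          * ((r + K₁) / (r - K₁) * ((r + K₂) / (r - K₂)))) * hPP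
    - (r + p) * (r + q) * (p - q) * ((r + K₁) / (r - K₁) * ((r + K₂) / (r - K₂))) * hPQ
    - (r + p) * (r + q) * (p - q)
        * (((p + K₁) / (p - K₁) * ((p + K₂) / (p - K₂)))
          * ((q + K₁) / (q - K₁) * ((q + K₂) / (q - K₂)))) * hRR
    - (q + r) * (q + p) * (r - p) * ((q + K₁) / (q - K₁) * ((q + K₂) / (q - K₂))) * hPR
    - (q + r) * (q + p) * (r - p)
        * (((p + K₁) / (p - K₁) * ((p + K₂) / (p - K₂)))
          * ((r + K₁) / (r - K₁) * ((r + K₂) / (r - K₂)))) * hQQ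

set_option maxHeartbeats 4000000 in
/-- One-soliton solution of the Miwa (lattice BKP) equation: with
`E(K)(n,m,h) = ((p+K)/(p-K))^n ((q+K)/(q-K))^m ((r+K)/(r-K))^h`, the explicit
(Pfaffian) τ-function `τ = 1 + (a/2)((K₁-K₂)/(K₁+K₂)) E(K₁) E(K₂)` satisfies
the four-term bilinear Miwa equation. -/
theorem miwa_one_soliton (p q r a K₁ K₂ : ℂ) (hK : K₁ + K₂ ≠ 0)
    (hp1 : p ≠ K₁) (hp1' : p ≠ -K₁) (hq1 : q ≠ K₁) (hq1' : q ≠ -K₁)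
    (hr1 : r ≠ K₁) (hr1' : r ≠ -K₁)
    (hp2 : p ≠ K₂) (hp2' : p ≠ -K₂) (hq2 : q ≠ K₂) (hq2' : q ≠ -K₂)
    (hr2 : r ≠ K₂) (hr2' : r ≠ -K₂)
    (E : ℂ → ℤ → ℤ → ℤ → ℂ)
    (hE : ∀ K : ℂ, ∀ n m h : ℤ,
      E K n m h = ((p + K) / (p - K)) ^ n * ((q + K) / (q - K)) ^ m *
        ((r + K) / (r - K)) ^ h)
    (τ : ℤ → ℤ → ℤ → ℂ)
    (hτ : ∀ n m h : ℤ,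
      τ n m h = 1 + (a / 2) * ((K₁ - K₂) / (K₁ + K₂)) * E K₁ n m h * E K₂ n m h) :
    ∀ n m h : ℤ,
      (p - q) * (q - r) * (r - p) * τ n m h * τ (n + 1) (m + 1) (h + 1)
        + (p + q) * (p + r) * (q - r) * τ (n + 1) m h * τ n (m + 1) (h + 1)
        + (r + p) * (r + q) * (p - q) * τ n m (h + 1) * τ (n + 1) (m + 1) h
        + (q + r) * (q + p) * (r - p) * τ n (m + 1) h * τ (n + 1) m (h + 1) = 0 := by
  have dp1 : p - K₁ ≠ 0 := sub_ne_zero.mpr hp1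
  have dq1 : q - K₁ ≠ 0 := sub_ne_zero.mpr hq1
  have dr1 : r - K₁ ≠ 0 := sub_ne_zero.mpr hr1
  have dp2 : p - K₂ ≠ 0 := sub_ne_zero.mpr hp2
  have dq2 : q - K₂ ≠ 0 := sub_ne_zero.mpr hq2
  have dr2 : r - K₂ ≠ 0 := sub_ne_zero.mpr hr2
  have sp1 : p + K₁ ≠ 0 := fun hh => hp1' (eq_neg_of_add_eq_zero_left hh)
  have sq1 : q + K₁ ≠ 0 := fun hh => hq1' (eq_neg_of_add_eq_zero_left hh)
  have sr1 : r + K₁ ≠ 0 := fun hh => hr1' (eq_neg_of_add_eq_zero_left hh)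
  have sp2 : p + K₂ ≠ 0 := fun hh => hp2' (eq_neg_of_add_eq_zero_left hh)
  have sq2 : q + K₂ ≠ 0 := fun hh => hq2' (eq_neg_of_add_eq_zero_left hh)
  have sr2 : r + K₂ ≠ 0 := fun hh => hr2' (eq_neg_of_add_eq_zero_left hh)
  intro n m h
  have Ep : ∀ K : ℂ, p + K ≠ 0 → p - K ≠ 0 → ∀ m' h' : ℤ,
      E K (n + 1) m' h' = ((p + K) / (p - K)) * E K n m' h' := by
    intro K h1 h2 m' h'
    rw [hE, hE, zpow_add_one₀ (div_ne_zero h1 h2)]; ring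
  have Eq' : ∀ K : ℂ, q + K ≠ 0 → q - K ≠ 0 → ∀ n' h' : ℤ,
      E K n' (m + 1) h' = ((q + K) / (q - K)) * E K n' m h' := by
    intro K h1 h2 n' h'
    rw [hE, hE, zpow_add_one₀ (div_ne_zero h1 h2)]; ring
  have Er : ∀ K : ℂ, r + K ≠ 0 → r - K ≠ 0 → ∀ n' m' : ℤ,
      E K n' m' (h + 1) = ((r + K) / (r - K)) * E K n' m' h := by
    intro K h1 h2 n' m'
    rw [hE, hE, zpow_add_one₀ (div_ne_zero h1 h2)]; ring
  have e1 := Ep K₁ sp1 dp1; have e2 := Ep K₂ sp2 dp2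
  have f1 := Eq' K₁ sq1 dq1; have f2 := Eq' K₂ sq2 dq2
  have g1 := Er K₁ sr1 dr1; have g2 := Er K₂ sr2 dr2
  simp only [hτ, e1, e2, f1, f2, g1, g2]
  have hS0 : (p - q) * (q - r) * (r - p) + (p + q) * (p + r) * (q - r)
      + (r + p) * (r + q) * (p - q) + (q + r) * (q + p) * (r - p) = 0 := by ring
  have hS1 := miwa_S1 p q r K₁ K₂ dp1 dq1 dr1 dp2 dq2 dr2
  linear_combination
    (1 + (a / 2 * ((K₁ - K₂) / (K₁ + K₂)))^2
        * ((p + K₁) / (p - K₁) * ((p + K₂) / (p - K₂)))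
        * ((q + K₁) / (q - K₁) * ((q + K₂) / (q - K₂)))
        * ((r + K₁) / (r - K₁) * ((r + K₂) / (r - K₂)))
        * (E K₁ n m h)^2 * (E K₂ n m h)^2) * hS0
    + (a / 2 * ((K₁ - K₂) / (K₁ + K₂))) * (E K₁ n m h) * (E K₂ n m h) * hS1
end

section
/- The CKP operator choice satisfies the closure relation: let A be an associative ℂ-algebra, Λ, M, O ∈ A, and p, q ∈ ℂ such that p - Λ, p + M, q - Λ, q + M are invertible in A. Define L_s = (s+Λ)(s-Λ)^{-1}, tL_s = (s-M)(s+M)^{-1}, O_s = 2s·(s+M)^{-1}·O·(s-Λ)^{-1} for s ∈ {p,q}. Then O_p·L_q - tL_q·O_p = O_q·L_p - tL_p·O_q. -/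
section Aux
variable {A : Type*} [Ring A]

lemma ckp_inv_comm {a b ia ib : A} (ha : a * ia = 1) (ha' : ia * a = 1)
    (hb : b * ib = 1) (hb' : ib * b = 1) (hab : a * b = b * a) :
    ia * ib = ib * ia := by
  have h1 : ib * a = a * ib := by
    calc ib * a = ib * a * (b * ib) := by rw [hb, mul_one]
      _ = ib * (a * b) * ib := by noncomm_ring
      _ = ib * (b * a) * ib := by rw [hab]
      _ = (ib * b) * (a * ib) := by noncomm_ring
      _ = a * ib := by rw [hb', one_mul]
  calc ia * ib = ia * ib * (a * ia) := by rw [ha, mul_one]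
    _ = ia * (ib * a) * ia := by noncomm_ring
    _ = ia * (a * ib) * ia := by rw [h1]
    _ = (ia * a) * (ib * ia) := by noncomm_ring
    _ = ib * ia := by rw [ha', one_mul]

lemma ckp_resolvent {a b ia ib : A} (ha' : ia * a = 1) (hb : b * ib = 1) :
    ia - ib = ia * (b - a) * ib := by
  have h : ia * (b - a) * ib = ia * (b * ib) - (ia * a) * ib := by noncomm_ring
  rw [h, hb, ha', mul_one, one_mul]

end Aux

/-- The CKP operator choice satisfies the closure relation: in an associative
ℂ-algebra with `p - Λ`, `p + M`, `q - Λ`, `q + M` invertible (with two-sided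
inverses `iΛp, iMp, iΛq, iMq`), the operators
`L_s = (s+Λ)(s-Λ)⁻¹`, `tL_s = (s-M)(s+M)⁻¹`, `O_s = 2s (s+M)⁻¹ O (s-Λ)⁻¹`
satisfy `O_p L_q - tL_q O_p = O_q L_p - tL_p O_q`. -/
theorem ckp_closure_relation (A : Type*) [Ring A] [Algebra ℂ A]
    (Λ M O : A) (p q : ℂ)
    (iΛp iMp iΛq iMq : A)
    (hΛp : (algebraMap ℂ A p - Λ) * iΛp = 1) (hΛp' : iΛp * (algebraMap ℂ A p - Λ) = 1)
    (hMp : (algebraMap ℂ A p + M) * iMp = 1) (hMp' : iMp * (algebraMap ℂ A p + M) = 1)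
    (hΛq : (algebraMap ℂ A q - Λ) * iΛq = 1) (hΛq' : iΛq * (algebraMap ℂ A q - Λ) = 1)
    (hMq : (algebraMap ℂ A q + M) * iMq = 1) (hMq' : iMq * (algebraMap ℂ A q + M) = 1) :
    ((2 * p) • (iMp * O * iΛp)) * ((algebraMap ℂ A q + Λ) * iΛq)
        - ((algebraMap ℂ A q - M) * iMq) * ((2 * p) • (iMp * O * iΛp)) =
      ((2 * q) • (iMq * O * iΛq)) * ((algebraMap ℂ A p + Λ) * iΛp)
        - ((algebraMap ℂ A p - M) * iMp) * ((2 * q) • (iMq * O * iΛq)) := by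
  have hcp : ∀ x : A, algebraMap ℂ A p * x = x * algebraMap ℂ A p := fun x => Algebra.commutes p x
  have hcq : ∀ x : A, algebraMap ℂ A q * x = x * algebraMap ℂ A q := fun x => Algebra.commutes q x
  -- commutation of the linear factors
  have hΛcomm : (algebraMap ℂ A p - Λ) * (algebraMap ℂ A q - Λ)
      = (algebraMap ℂ A q - Λ) * (algebraMap ℂ A p - Λ) :=
    ((Algebra.commute_algebraMap_left p _).sub_left
      ((Algebra.commute_algebraMap_right q Λ).sub_right (Commute.refl Λ)))
  have hMcomm : (algebraMap ℂ A p + M) * (algebraMap ℂ A q + M)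
      = (algebraMap ℂ A q + M) * (algebraMap ℂ A p + M) :=
    ((Algebra.commute_algebraMap_left p _).add_left
      ((Algebra.commute_algebraMap_right q M).add_right (Commute.refl M)))
  have hΛi : iΛp * iΛq = iΛq * iΛp := ckp_inv_comm hΛp hΛp' hΛq hΛq' hΛcomm
  have hMi : iMp * iMq = iMq * iMp := ckp_inv_comm hMp hMp' hMq hMq' hMcomm
  -- resolvent identities
  have hdiffΛ : (algebraMap ℂ A q - Λ) - (algebraMap ℂ A p - Λ) = (q - p) • (1 : A) := by
    rw [sub_sub_sub_cancel_right, ← map_sub, Algebra.algebraMap_eq_smul_one]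
  have hdiffM : (algebraMap ℂ A q + M) - (algebraMap ℂ A p + M) = (q - p) • (1 : A) := by
    rw [add_sub_add_right_eq_sub, ← map_sub, Algebra.algebraMap_eq_smul_one]
  have hresΛ : iΛp - iΛq = (q - p) • (iΛp * iΛq) := by
    rw [ckp_resolvent hΛp' hΛq, hdiffΛ, mul_smul_comm, mul_one, smul_mul_assoc]
  have hresM : iMp - iMq = (q - p) • (iMp * iMq) := by
    rw [ckp_resolvent hMp' hMq, hdiffM, mul_smul_comm, mul_one, smul_mul_assoc]
  -- the key identity (denominator-free part)
  have e1 : (iMp * O * iΛp) * iΛq - (iMq * O * iΛq) * iΛp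
      = (q - p) • ((iMp * iMq) * (O * (iΛp * iΛq))) := by
    have h1 : (iMp * O * iΛp) * iΛq = iMp * (O * (iΛp * iΛq)) := by noncomm_ring
    have h2 : (iMq * O * iΛq) * iΛp = iMq * (O * (iΛp * iΛq)) := by
      rw [hΛi]; noncomm_ring
    rw [h1, h2, ← sub_mul, hresM, smul_mul_assoc]
  have e2 : iMq * (iMp * O * iΛp) - iMp * (iMq * O * iΛq)
      = (q - p) • ((iMp * iMq) * (O * (iΛp * iΛq))) := by
    have h1 : iMq * (iMp * O * iΛp) = (iMp * iMq) * O * iΛp := by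
      rw [show iMq * (iMp * O * iΛp) = (iMq * iMp) * (O * iΛp) from by noncomm_ring, ← hMi]
      noncomm_ring
    have h2 : iMp * (iMq * O * iΛq) = (iMp * iMq) * O * iΛq := by noncomm_ring
    have h3 : (iMp * iMq) * O * iΛp - (iMp * iMq) * O * iΛq
        = ((iMp * iMq) * O) * (iΛp - iΛq) := by noncomm_ring
    rw [h1, h2, h3, hresΛ, mul_smul_comm, mul_assoc]
  have key : (iMp * O * iΛp) * iΛq - iMq * (iMp * O * iΛp)
      = (iMq * O * iΛq) * iΛp - iMp * (iMq * O * iΛq) :=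
    sub_eq_sub_iff_sub_eq_sub.mpr (e1.trans e2.symm)
  -- rewrite the Cayley-transform factors
  have hsum : ∀ s : ℂ, (2 * s) • (1 : A) = algebraMap ℂ A s + algebraMap ℂ A s := by
    intro s
    rw [two_mul, add_smul, Algebra.algebraMap_eq_smul_one]
  have hq1 : (algebraMap ℂ A q + Λ) * iΛq = (2 * q) • iΛq - 1 := by
    have h : algebraMap ℂ A q + Λ = (2 * q) • (1 : A) - (algebraMap ℂ A q - Λ) := by
      rw [hsum q]; abel
    rw [h, sub_mul, smul_mul_assoc, one_mul, hΛq]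
  have hp1 : (algebraMap ℂ A p + Λ) * iΛp = (2 * p) • iΛp - 1 := by
    have h : algebraMap ℂ A p + Λ = (2 * p) • (1 : A) - (algebraMap ℂ A p - Λ) := by
      rw [hsum p]; abel
    rw [h, sub_mul, smul_mul_assoc, one_mul, hΛp]
  have hq2 : (algebraMap ℂ A q - M) * iMq = (2 * q) • iMq - 1 := by
    have h : algebraMap ℂ A q - M = (2 * q) • (1 : A) - (algebraMap ℂ A q + M) := by
      rw [hsum q]; abel
    rw [h, sub_mul, smul_mul_assoc, one_mul, hMq]
  have hp2 : (algebraMap ℂ A p - M) * iMp = (2 * p) • (1 : A) * iMp - 1 := by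
    have h : algebraMap ℂ A p - M = (2 * p) • (1 : A) - (algebraMap ℂ A p + M) := by
      rw [hsum p]; abel
    rw [h, sub_mul, hMp]
  rw [hq1, hq2, hp1, hp2]
  simp only [mul_sub, sub_mul, mul_one, one_mul, smul_mul_assoc, mul_smul_comm, smul_smul,
    smul_sub]
  have hc : (2 * q * (2 * p) : ℂ) = 2 * p * (2 * q) := by ring
  rw [hc]
  have h := congrArg (fun z => (2 * p * (2 * q)) • z) key
  simp only [smul_sub] at h
  rw [sub_sub_sub_cancel_right, sub_sub_sub_cancel_right]
  exact h
end

section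
/- The BKP operator choice satisfies the closure relation: let A be an associative ℂ-algebra, Λ, M, O ∈ A, and p, q ∈ ℂ with p±Λ, p±M, q±Λ, q±M invertible as needed. Define L_s = (s+Λ)(s-Λ)^{-1}, tL_s = (s-M)(s+M)^{-1}, O_s = s·(s+M)^{-1}·(O·Λ - M·O)·(s-Λ)^{-1}. Then O_p·L_q - tL_q·O_p = O_q·L_p - tL_p·O_q. -/
private lemma comm_inv {A : Type*} [Ring A] (x y iy : A) (h1 : y * iy = 1)
    (h2 : iy * y = 1) (hc : x * y = y * x) : x * iy = iy * x := by
  calc x * iy = iy * y * x * iy := by rw [h2, one_mul]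
    _ = iy * (x * y) * iy := by rw [mul_assoc iy y x, hc]
    _ = iy * x * (y * iy) := by rw [← mul_assoc iy x y, mul_assoc (iy*x) y iy]
    _ = iy * x := by rw [h1, mul_one]

private lemma hcore_gen {A : Type*} [Ring A] (Λ M N P Q ap aq bp bq : A)
    (hP : ∀ z : A, P * z = z * P) (hQ : ∀ z : A, Q * z = z * Q)
    (hΛp : (P - Λ) * ap = 1) (hΛp' : ap * (P - Λ) = 1)
    (hMp : (P + M) * bp = 1) (hMp' : bp * (P + M) = 1)
    (hΛq : (Q - Λ) * aq = 1) (hΛq' : aq * (Q - Λ) = 1)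
    (hMq : (Q + M) * bq = 1) (hMq' : bq * (Q + M) = 1) :
    bp * N * ap * aq - bq * (bp * N * ap) = bq * N * aq * ap - bp * (bq * N * aq) := by
  have cPQΛ : (Q - Λ) * (P - Λ) = (P - Λ) * (Q - Λ) := by
    simp only [sub_mul, mul_sub]
    rw [hQ P, hQ Λ, hP Λ]
    abel
  have cPQM : (Q + M) * (P + M) = (P + M) * (Q + M) := by
    simp only [add_mul, mul_add]
    rw [hQ P, hQ M, hP M]
    abel
  have h1 : (Q - Λ) * ap = ap * (Q - Λ) := comm_inv _ _ _ hΛp hΛp' cPQΛ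
  have h3 : ap * aq = aq * ap := comm_inv ap (Q - Λ) aq hΛq hΛq' h1.symm
  have h5 : (P + M) * bq = bq * (P + M) := comm_inv _ _ _ hMq hMq' cPQM.symm
  have h6 : bq * bp = bp * bq := comm_inv bq (P + M) bp hMp hMp' h5.symm
  have eA : (Q - Λ) * (ap * aq) = ap := by
    rw [← mul_assoc, h1, mul_assoc, hΛq, mul_one]
  have t1 : bp * N * ap * aq = (bp * bq) * ((Q + M) * N) * (ap * aq) := by
    simp only [mul_assoc]
    rw [← mul_assoc bq (Q + M), hMq', one_mul]
  have t2 : bq * (bp * N * ap) = (bp * bq) * (N * (Q - Λ)) * (ap * aq) := by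
    simp only [mul_assoc]
    rw [eA, ← mul_assoc bq bp, ← mul_assoc bp bq, h6]
  have t3 : bq * N * aq * ap = (bp * bq) * ((P + M) * N) * (ap * aq) := by
    simp only [mul_assoc]
    rw [← h3, ← mul_assoc bq (P + M), ← h5, mul_assoc (P + M) bq,
      ← mul_assoc bp (P + M), hMp', one_mul]
  have t4 : bp * (bq * N * aq) = (bp * bq) * (N * (P - Λ)) * (ap * aq) := by
    simp only [mul_assoc]
    rw [← mul_assoc (P - Λ) ap, hΛp, one_mul]
  have hNkey : (Q + M) * N - N * (Q - Λ) = (P + M) * N - N * (P - Λ) := by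
    simp only [add_mul, mul_sub]
    rw [hQ N, hP N]
    abel
  have brk : ∀ X Y : A, (bp*bq) * X * (ap*aq) - (bp*bq) * Y * (ap*aq)
      = (bp*bq) * ((X - Y) * (ap*aq)) := by
    intro X Y
    simp only [sub_mul, mul_sub, mul_assoc]
  rw [t1, t2, t3, t4, brk, brk, hNkey]

private lemma eL_gen {A : Type*} [Ring A] [Algebra ℂ A] (Λ x : A) (s : ℂ)
    (h : (algebraMap ℂ A s - Λ) * x = 1) :
    (algebraMap ℂ A s + Λ) * x = (2*s) • x - 1 := by
  have h' : algebraMap ℂ A s * x - Λ * x = 1 := by rw [← sub_mul]; exact h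
  rw [add_mul, Algebra.smul_def, map_mul, map_ofNat, mul_assoc, two_mul, ← h']
  abel

private lemma eM_gen {A : Type*} [Ring A] [Algebra ℂ A] (M x : A) (s : ℂ)
    (h : (algebraMap ℂ A s + M) * x = 1) :
    (algebraMap ℂ A s - M) * x = (2*s) • x - 1 := by
  have h' : algebraMap ℂ A s * x + M * x = 1 := by rw [← add_mul]; exact h
  rw [sub_mul, Algebra.smul_def, map_mul, map_ofNat, mul_assoc, two_mul, ← h']
  abel

private lemma side_gen {A : Type*} [Ring A] [Algebra ℂ A] (s t : ℂ) (X a b : A) :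
    (s • X) * ((2*t) • a - 1) - ((2*t) • b - 1) * (s • X)
      = (2*s*t) • (X * a - b * X) := by
  simp only [mul_sub, sub_mul, smul_mul_assoc, mul_smul_comm, smul_smul, mul_one,
    one_mul, smul_sub]
  module

/-- The BKP operator choice satisfies the closure relation: in an associative
ℂ-algebra with `p - Λ`, `p + M`, `q - Λ`, `q + M` invertible (with two-sided
inverses `iΛp, iMp, iΛq, iMq`), the operators
`L_s = (s+Λ)(s-Λ)⁻¹`, `tL_s = (s-M)(s+M)⁻¹`,
`O_s = s (s+M)⁻¹ (O Λ - M O) (s-Λ)⁻¹`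
satisfy `O_p L_q - tL_q O_p = O_q L_p - tL_p O_q`. -/
theorem bkp_closure_relation (A : Type*) [Ring A] [Algebra ℂ A]
    (Λ M O : A) (p q : ℂ)
    (iΛp iMp iΛq iMq : A)
    (hΛp : (algebraMap ℂ A p - Λ) * iΛp = 1) (hΛp' : iΛp * (algebraMap ℂ A p - Λ) = 1)
    (hMp : (algebraMap ℂ A p + M) * iMp = 1) (hMp' : iMp * (algebraMap ℂ A p + M) = 1)
    (hΛq : (algebraMap ℂ A q - Λ) * iΛq = 1) (hΛq' : iΛq * (algebraMap ℂ A q - Λ) = 1)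
    (hMq : (algebraMap ℂ A q + M) * iMq = 1) (hMq' : iMq * (algebraMap ℂ A q + M) = 1) :
    (p • (iMp * (O * Λ - M * O) * iΛp)) * ((algebraMap ℂ A q + Λ) * iΛq)
        - ((algebraMap ℂ A q - M) * iMq) * (p • (iMp * (O * Λ - M * O) * iΛp)) =
      (q • (iMq * (O * Λ - M * O) * iΛq)) * ((algebraMap ℂ A p + Λ) * iΛp)
        - ((algebraMap ℂ A p - M) * iMp) * (q • (iMq * (O * Λ - M * O) * iΛq)) := by
  have hcore := hcore_gen Λ M (O * Λ - M * O) (algebraMap ℂ A p) (algebraMap ℂ A q)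
    iΛp iΛq iMp iMq (fun z => Algebra.commutes p z) (fun z => Algebra.commutes q z)
    hΛp hΛp' hMp hMp' hΛq hΛq' hMq hMq'
  rw [eL_gen Λ iΛq q hΛq, eM_gen M iMq q hMq, eL_gen Λ iΛp p hΛp, eM_gen M iMp p hMp,
    side_gen, side_gen, show ((2:ℂ)*q*p) = 2*p*q by ring, hcore]
end
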